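/- Let p, r ∈ ℤ. Then: ∂_0(c^r_p) = c^2_{p-1} if r = 1; ∂_0(c^r_p) = 2c^2_{p-1} if r = 0; ∂_0(c^r_p) = 2c^1_{p-1} - c_{p-1} if r = -1; and ∂_0(c^r_p) = 0 if |r| ≥ 2. In particular ∂_0(c^{-1}_p) = 2a^1_{p-1}, ∂_1(c^{-1}_p) = 2a^0_{p-1}, and (∂_0 + ∂_1)(c^{-1}_p) = 2c^1_{p-1}. -/

import Mathlib

/-!
The polynomial ring `R2 = ℚ[c₁, c₂, …, t₁, t₂, …]`: the variable `Sum.inl p` (for `p ≥ 1`)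
is `c_p`, and `Sum.inr i` (for `i ≥ 1`) is `t_i`.
-/

noncomputable section
open MvPolynomial Finset
open scoped Classical

abbrev R2 : Type := MvPolynomial (ℕ ⊕ ℕ) ℚ

/-- The variable `t_i`. -/
def Tv (i : ℕ) : R2 := X (Sum.inr i)

/-- `c_p`, with the conventions `c_0 = 1` and `c_p = 0` for `p < 0`. -/
def Cv (p : ℤ) : R2 := if p < 0 then 0 else if p = 0 then 1 else X (Sum.inl p.toNat)

/-- The complete homogeneous symmetric polynomial `h_j` evaluated on a list. -/
def hfun : List R2 → ℕ → R2
  | [], j => if j = 0 then 1 else 0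
  | a :: L, j => ∑ i ∈ Finset.range (j + 1), a ^ i * hfun L (j - i)

/-- The elementary symmetric polynomial `e_j` evaluated on a list. -/
def efun : List R2 → ℕ → R2
  | [], j => if j = 0 then 1 else 0
  | _ :: _, 0 => 1
  | a :: L, j + 1 => efun L (j + 1) + a * efun L j

/-- The list `(-t_1, …, -t_r)`. -/
def negT (r : ℕ) : List R2 := (List.range r).map fun i => -Tv (i + 1)

/-- `h^r_j(-t)`: complete homogeneous for `r ≥ 0`, elementary `e^{-r}_j(-t)` for `r < 0`. -/
def hmt (r : ℤ) (j : ℕ) : R2 :=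
  if 0 ≤ r then hfun (negT r.toNat) j else efun (negT (-r).toNat) j

/-- `c^r_p := Σ_{j=0}^p c_{p-j} h^r_j(-t)`. -/
def cc (r p : ℤ) : R2 := ∑ j ∈ Finset.range (p.toNat + 1), Cv (p - j) * hmt r j

/-- `a^s_p := (1/2)c_p + Σ_{j=1}^p c_{p-j} h^s_j(-t)`. -/
def aa (s p : ℤ) : R2 :=
  C (1/2 : ℚ) * Cv p + ∑ j ∈ Finset.Icc 1 p.toNat, Cv (p - j) * hmt s j

/-- Images of the variables under the automorphism `s_i`. -/
def sImg : ℕ → ℕ ⊕ ℕ → R2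
  | 0, Sum.inr j => if j = 1 then -Tv 2 else if j = 2 then -Tv 1 else Tv j
  | 0, Sum.inl p =>
      if p = 0 then X (Sum.inl 0)
      else Cv p - 2 * (Tv 1 + Tv 2) *
        ∑ j ∈ Finset.range p, (-1 : R2) ^ j *
          (∑ a ∈ Finset.range (j + 1), Tv 1 ^ a * Tv 2 ^ (j - a)) * Cv ((p : ℤ) - 1 - j)
  | i + 1, Sum.inr j =>
      if j = i + 1 then Tv (i + 2) else if j = i + 2 then Tv (i + 1) else Tv j
  | _ + 1, Sum.inl p => X (Sum.inl p)

/-- The ring automorphism `s_i` of `R2`. -/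
def sA (i : ℕ) : R2 →ₐ[ℚ] R2 := aeval (sImg i)

/-- The fraction field of `R2`. -/
abbrev KK : Type := FractionRing R2

/-- The canonical embedding of `R2` into its fraction field. -/
def toK : R2 →+* KK := algebraMap R2 KK

/-- The denominator `t_1 + t_2` (for `i = 0`) resp. `t_{i+1} - t_i` (for `i ≥ 1`). -/
def dden (i : ℕ) : R2 := if i = 0 then Tv 1 + Tv 2 else Tv (i + 1) - Tv i

/-- The divided difference operator `∂_i`, with values in the fraction field. -/
def dd (i : ℕ) (f : R2) : KK := (toK f - toK (sA i f)) / toK (dden i)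

/-!
Everything is read off generating series in `u`. With `C(u) = Σ c_p u^p` and
`H^r(u) = Σ_j h^r_j(-t) u^j`, which is `∏_{i ≤ r} (1 + t_i u)⁻¹` for `r ≥ 0` and
`∏_{i ≤ -r} (1 - t_i u)` for `r < 0`, the series of `c^r_p` is `C(u) H^r(u)`. The defining
identity of `s_0` on `C(u)` is cancelled exactly by the factors of `t_1, t_2` in `H^r(u)` when
`|r| ≥ 2`, and for `|r| ≤ 1` the difference `C H^r - s_0(C H^r)` is `(t_1 + t_2) u` times the
series of the claimed right-hand side; `∂_1 (C H^{-1})` is computed in the same way.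
-/

open scoped PowerSeries

lemma hfun_zero (L : List R2) : hfun L 0 = 1 := by
  induction L with
  | nil => simp [hfun]
  | cons a L ih => simp [hfun, ih]

lemma efun_zero (L : List R2) : efun L 0 = 1 := by
  cases L <;> simp [efun]

lemma hfun_cons_succ (a : R2) (L : List R2) (n : ℕ) :
    hfun (a :: L) (n + 1) = hfun L (n + 1) + a * hfun (a :: L) n := by
  rw [hfun, sum_range_succ', add_comm, hfun, mul_sum]
  congr 1
  · simp
  · exact sum_congr rfl fun i _ => by rw [Nat.succ_sub_succ]; ring

lemma mk_hfun_mul_prod (L : List R2) :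
    PowerSeries.mk (hfun L) * (L.map fun a => 1 - PowerSeries.C a * PowerSeries.X).prod = 1 := by
  induction L with
  | nil =>
    ext n : 1
    cases n <;> simp [hfun, PowerSeries.coeff_one]
  | cons a L ih =>
    have hstep : PowerSeries.mk (hfun (a :: L)) * (1 - PowerSeries.C a * PowerSeries.X) =
        PowerSeries.mk (hfun L) := by
      ext n : 1
      cases n with
      | zero => simp [hfun_zero]
      | succ n =>
        rw [mul_sub, mul_one, ← mul_assoc, map_sub, PowerSeries.coeff_succ_mul_X,
          PowerSeries.coeff_mul_C]
        simp only [PowerSeries.coeff_mk, hfun_cons_succ]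
        ring
    rw [List.map_cons, List.prod_cons, ← mul_assoc, hstep, ih]

lemma mk_efun (L : List R2) :
    PowerSeries.mk (efun L) = (L.map fun a => 1 + PowerSeries.C a * PowerSeries.X).prod := by
  induction L with
  | nil =>
    ext n : 1
    cases n <;> simp [efun, PowerSeries.coeff_one]
  | cons a L ih =>
    rw [List.map_cons, List.prod_cons, ← ih]
    ext n : 1
    cases n with
    | zero => simp [efun_zero]
    | succ n =>
      rw [add_mul, one_mul, map_add, mul_assoc, PowerSeries.coeff_C_mul,
        PowerSeries.coeff_succ_X_mul]
      simp only [PowerSeries.coeff_mk, efun]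

def plusT (i : ℕ) : R2⟦X⟧ := 1 + PowerSeries.C (Tv i) * PowerSeries.X

def minusT (i : ℕ) : R2⟦X⟧ := 1 - PowerSeries.C (Tv i) * PowerSeries.X

def cSeries : R2⟦X⟧ := PowerSeries.mk fun n => Cv n

def hSeries (r : ℤ) : R2⟦X⟧ := PowerSeries.mk (hmt r)

lemma isUnit_plusT (i : ℕ) : IsUnit (plusT i) := by
  simp [plusT, PowerSeries.isUnit_iff_constantCoeff]

lemma isUnit_minusT (i : ℕ) : IsUnit (minusT i) := by
  simp [minusT, PowerSeries.isUnit_iff_constantCoeff]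

lemma list_prod_map_range {M : Type*} [CommMonoid M] (f : ℕ → M) (n : ℕ) :
    ((List.range n).map f).prod = ∏ i ∈ range n, f i := by
  rw [prod_eq_multiset_prod]
  rfl

lemma hSeries_natCast_mul_prod (r : ℕ) : hSeries r * ∏ i ∈ range r, plusT (i + 1) = 1 := by
  have hH : hSeries r = PowerSeries.mk (hfun (negT r)) := by
    ext j : 1
    simp [hSeries, hmt]
  have hP : ∏ i ∈ range r, plusT (i + 1) =
      ((negT r).map fun a => 1 - PowerSeries.C a * PowerSeries.X).prod := by
    simp [negT, list_prod_map_range, plusT, Function.comp_def]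
  rw [hH, hP, mk_hfun_mul_prod]

lemma hSeries_neg_natCast (r : ℕ) : hSeries (-r) = ∏ i ∈ range r, minusT (i + 1) := by
  rcases Nat.eq_zero_or_pos r with rfl | hr
  · simpa [hSeries] using hSeries_natCast_mul_prod 0
  · have hH : hSeries (-r) = PowerSeries.mk (efun (negT r)) := by
      ext j : 1
      simp [hSeries, hmt, hr.ne']
    rw [hH, mk_efun]
    simp [negT, list_prod_map_range, minusT, Function.comp_def, sub_eq_add_neg]

lemma hSeries_zero : hSeries 0 = 1 := by
  simpa using hSeries_natCast_mul_prod 0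

lemma hSeries_one_mul : hSeries 1 * plusT 1 = 1 := by
  simpa using hSeries_natCast_mul_prod 1

lemma hSeries_two_mul : hSeries 2 * (plusT 1 * plusT 2) = 1 := by
  simpa [prod_range_succ] using hSeries_natCast_mul_prod 2

lemma hSeries_neg_one : hSeries (-1) = minusT 1 := by
  simpa using hSeries_neg_natCast 1

lemma cc_natCast (r : ℤ) (n : ℕ) : cc r n = PowerSeries.coeff n (cSeries * hSeries r) := by
  rw [PowerSeries.coeff_mul, Nat.sum_antidiagonal_eq_sum_range_succ_mk, cc, Int.toNat_natCast,
    ← sum_range_reflect]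
  refine sum_congr rfl fun j hj => ?_
  have hj : j < n + 1 := mem_range.mp hj
  simp only [cSeries, hSeries, PowerSeries.coeff_mk]
  rw [show n + 1 - 1 - j = n - j by omega, Nat.cast_sub (by omega), sub_sub_cancel]

def sSeries (i : ℕ) : R2⟦X⟧ →+* R2⟦X⟧ := PowerSeries.map (sA i).toRingHom

lemma coeff_sSeries (i n : ℕ) (F : R2⟦X⟧) :
    PowerSeries.coeff n (sSeries i F) = sA i (PowerSeries.coeff n F) := by
  simp [sSeries]

lemma sSeries_C (i : ℕ) (a : R2) : sSeries i (PowerSeries.C a) = PowerSeries.C (sA i a) :=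
  PowerSeries.map_C _ a

lemma sSeries_X (i : ℕ) : sSeries i PowerSeries.X = PowerSeries.X :=
  PowerSeries.map_X _

lemma sA_X (i : ℕ) (v : ℕ ⊕ ℕ) : sA i (X v) = sImg i v :=
  aeval_X _ v

lemma sA_zero_Tv_one : sA 0 (Tv 1) = -Tv 2 := by simp [Tv, sA_X, sImg]

lemma sA_zero_Tv_two : sA 0 (Tv 2) = -Tv 1 := by simp [Tv, sA_X, sImg]

lemma sA_zero_Tv_of_three_le {j : ℕ} (hj : 3 ≤ j) : sA 0 (Tv j) = Tv j := by
  rw [Tv, sA_X, sImg, if_neg (by omega), if_neg (by omega), Tv]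

lemma sA_one_Tv_one : sA 1 (Tv 1) = Tv 2 := by simp [Tv, sA_X, sImg]

lemma sA_one_Cv (m : ℤ) : sA 1 (Cv m) = Cv m := by
  unfold Cv
  split_ifs <;> simp [sA_X, sImg]

lemma sSeries_plusT (i j : ℕ) :
    sSeries i (plusT j) = 1 + PowerSeries.C (sA i (Tv j)) * PowerSeries.X := by
  rw [plusT, map_add, map_one, map_mul, sSeries_C, sSeries_X]

lemma sSeries_minusT (i j : ℕ) :
    sSeries i (minusT j) = 1 - PowerSeries.C (sA i (Tv j)) * PowerSeries.X := by
  rw [minusT, map_sub, map_one, map_mul, sSeries_C, sSeries_X]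

lemma sSeries_zero_plusT_one : sSeries 0 (plusT 1) = minusT 2 := by
  simp [sSeries_plusT, sA_zero_Tv_one, minusT, sub_eq_add_neg]

lemma sSeries_zero_plusT_two : sSeries 0 (plusT 2) = minusT 1 := by
  simp [sSeries_plusT, sA_zero_Tv_two, minusT, sub_eq_add_neg]

lemma sSeries_zero_minusT_one : sSeries 0 (minusT 1) = plusT 2 := by
  simp [sSeries_minusT, sA_zero_Tv_one, plusT, sub_eq_add_neg]

lemma sSeries_zero_minusT_two : sSeries 0 (minusT 2) = plusT 1 := by
  simp [sSeries_minusT, sA_zero_Tv_two, plusT, sub_eq_add_neg]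

lemma sSeries_zero_plusT_of_three_le {j : ℕ} (hj : 3 ≤ j) : sSeries 0 (plusT j) = plusT j := by
  rw [sSeries_plusT, sA_zero_Tv_of_three_le hj, plusT]

lemma sSeries_zero_minusT_of_three_le {j : ℕ} (hj : 3 ≤ j) :
    sSeries 0 (minusT j) = minusT j := by
  rw [sSeries_minusT, sA_zero_Tv_of_three_le hj, minusT]

lemma sSeries_one_minusT_one : sSeries 1 (minusT 1) = minusT 2 := by
  rw [sSeries_minusT, sA_one_Tv_one, minusT]

lemma sSeries_one_cSeries : sSeries 1 cSeries = cSeries := by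
  ext n : 1
  rw [coeff_sSeries, cSeries, PowerSeries.coeff_mk, sA_one_Cv]

lemma hfun_singleton (b : R2) (m : ℕ) : hfun [b] m = b ^ m := by
  rw [hfun, sum_eq_single_of_mem m (self_mem_range_succ m)]
  · simp [hfun]
  · intro i hi hne
    simp [hfun, show m - i ≠ 0 by simp at hi; omega]

lemma hmt_two (j : ℕ) :
    hmt 2 j = (-1) ^ j * ∑ a ∈ range (j + 1), Tv 1 ^ a * Tv 2 ^ (j - a) := by
  have hnegT : negT 2 = [-Tv 1, -Tv 2] := by simp [negT, List.range_succ]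
  rw [hmt, if_pos (by norm_num), show (2 : ℤ).toNat = 2 from rfl, hnegT, hfun, mul_sum]
  refine sum_congr rfl fun a ha => ?_
  have hpow : (-1 : R2) ^ j = (-1) ^ a * (-1) ^ (j - a) := by
    rw [← pow_add, Nat.add_sub_cancel' (by simpa [Nat.lt_succ_iff] using ha)]
  rw [hfun_singleton, neg_pow, neg_pow, hpow]
  ring

lemma sA_zero_Cv_succ (n : ℕ) :
    sA 0 (Cv (n + 1 : ℕ)) = Cv (n + 1 : ℕ) - 2 * (Tv 1 + Tv 2) *
      ∑ j ∈ range (n + 1), hmt 2 j * Cv (n - j : ℕ) := by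
  have hC : Cv (n + 1 : ℕ) = X (Sum.inl (n + 1)) := by
    rw [Cv, if_neg (by omega), if_neg (by omega), Int.toNat_natCast]
  rw [hC, sA_X, sImg, if_neg n.succ_ne_zero, ← hC]
  congr 2
  refine sum_congr rfl fun j hj => ?_
  rw [hmt_two, Nat.cast_sub (by simpa [Nat.lt_succ_iff] using hj)]
  push_cast
  ring_nf

lemma sSeries_zero_cSeries_eq_sub : sSeries 0 cSeries =
    cSeries - PowerSeries.C (2 * (Tv 1 + Tv 2)) * (PowerSeries.X * (hSeries 2 * cSeries)) := by
  ext n : 1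
  rw [map_sub, coeff_sSeries, PowerSeries.coeff_C_mul]
  cases n with
  | zero => simp [cSeries, Cv]
  | succ n =>
    rw [PowerSeries.coeff_succ_X_mul, PowerSeries.coeff_mul,
      Nat.sum_antidiagonal_eq_sum_range_succ_mk]
    simp only [cSeries, hSeries, PowerSeries.coeff_mk]
    exact sA_zero_Cv_succ n

/-- The defining identity `s_0 C(u) = C(u) (1 - t_1 u)(1 - t_2 u) / ((1 + t_1 u)(1 + t_2 u))`. -/
lemma sSeries_zero_cSeries_mul_plusT :
    sSeries 0 cSeries * (plusT 1 * plusT 2) = cSeries * (minusT 1 * minusT 2) := by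
  have hC : PowerSeries.C (2 * (Tv 1 + Tv 2)) =
      2 * (PowerSeries.C (Tv 1) + PowerSeries.C (Tv 2)) := by
    rw [map_mul, map_add, map_ofNat]
  rw [sSeries_zero_cSeries_eq_sub, hC]
  linear_combination (norm := skip) (-2 * (PowerSeries.C (Tv 1) + PowerSeries.C (Tv 2)) *
    PowerSeries.X * cSeries) * hSeries_two_mul
  unfold plusT minusT
  ring

lemma C_dden_zero : PowerSeries.C (dden 0) = PowerSeries.C (Tv 1) + PowerSeries.C (Tv 2) :=
  map_add _ _ _

lemma cSeries_mul_hSeries_one_sub_sSeries_zero :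
    cSeries * hSeries 1 - sSeries 0 (cSeries * hSeries 1) =
      PowerSeries.C (dden 0) * (PowerSeries.X * (cSeries * hSeries 2)) := by
  have hs₁ : sSeries 0 (hSeries 1) * minusT 2 = 1 := by
    simpa [sSeries_zero_plusT_one] using congrArg (sSeries 0) hSeries_one_mul
  -- clear the denominators of `H^1`, `s_0 H^1` and `H^2`
  refine ((isUnit_plusT 1).mul ((isUnit_plusT 2).mul (isUnit_minusT 2))).mul_right_cancel ?_
  rw [map_mul, C_dden_zero]
  linear_combination (norm := skip) (cSeries * plusT 2 * minusT 2) * hSeries_one_mul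
    - (sSeries 0 (hSeries 1) * minusT 2) * sSeries_zero_cSeries_mul_plusT
    - (cSeries * minusT 1 * minusT 2) * hs₁
    - ((PowerSeries.C (Tv 1) + PowerSeries.C (Tv 2)) * PowerSeries.X * cSeries * minusT 2) *
      hSeries_two_mul
  unfold plusT minusT
  ring

lemma cSeries_mul_hSeries_zero_sub_sSeries_zero :
    cSeries * hSeries 0 - sSeries 0 (cSeries * hSeries 0) =
      PowerSeries.C (dden 0) * (PowerSeries.X * (2 * (cSeries * hSeries 2))) := by
  refine ((isUnit_plusT 1).mul (isUnit_plusT 2)).mul_right_cancel ?_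
  rw [hSeries_zero, mul_one, C_dden_zero]
  linear_combination (norm := skip) -sSeries_zero_cSeries_mul_plusT
    - (2 * (PowerSeries.C (Tv 1) + PowerSeries.C (Tv 2)) * PowerSeries.X * cSeries) *
      hSeries_two_mul
  unfold plusT minusT
  ring

lemma cSeries_mul_hSeries_neg_one_sub_sSeries_zero :
    cSeries * hSeries (-1) - sSeries 0 (cSeries * hSeries (-1)) =
      PowerSeries.C (dden 0) * (PowerSeries.X * (2 * (cSeries * hSeries 1) - cSeries)) := by
  refine (isUnit_plusT 1).mul_right_cancel ?_
  rw [hSeries_neg_one, map_mul, sSeries_zero_minusT_one, C_dden_zero]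
  linear_combination (norm := skip) -sSeries_zero_cSeries_mul_plusT
    - (2 * (PowerSeries.C (Tv 1) + PowerSeries.C (Tv 2)) * PowerSeries.X * cSeries) *
      hSeries_one_mul
  unfold plusT minusT
  ring

lemma cSeries_mul_hSeries_neg_one_sub_sSeries_one :
    cSeries * hSeries (-1) - sSeries 1 (cSeries * hSeries (-1)) =
      PowerSeries.C (dden 1) * (PowerSeries.X * cSeries) := by
  rw [hSeries_neg_one, map_mul, sSeries_one_cSeries, sSeries_one_minusT_one, dden,
    if_neg one_ne_zero, map_sub, minusT, minusT]
  ring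

lemma sSeries_zero_cSeries_mul_hSeries_natCast_add_two (k : ℕ) :
    sSeries 0 (cSeries * hSeries (k + 2 : ℕ)) = cSeries * hSeries (k + 2 : ℕ) := by
  set Q := ∏ i ∈ range k, plusT (i + 3)
  have hQ : sSeries 0 Q = Q := by
    rw [map_prod]
    exact prod_congr rfl fun i _ => sSeries_zero_plusT_of_three_le (by omega)
  have hH : hSeries (k + 2 : ℕ) * (Q * plusT 2 * plusT 1) = 1 := by
    simpa [prod_range_succ', Q] using hSeries_natCast_mul_prod (k + 2)
  have hsH : sSeries 0 (hSeries (k + 2 : ℕ)) * (Q * minusT 1 * minusT 2) = 1 := by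
    simpa [hQ, sSeries_zero_plusT_one, sSeries_zero_plusT_two] using congrArg (sSeries 0) hH
  have hu : IsUnit (Q * plusT 2 * plusT 1 * (minusT 1 * minusT 2)) :=
    (IsUnit.of_mul_eq_one_right _ hH).mul ((isUnit_minusT 1).mul (isUnit_minusT 2))
  refine hu.mul_right_cancel ?_
  rw [map_mul]
  linear_combination (sSeries 0 cSeries * (plusT 1 * plusT 2)) * hsH
    + sSeries_zero_cSeries_mul_plusT
    - (cSeries * (minusT 1 * minusT 2)) * hH

lemma sSeries_zero_cSeries_mul_hSeries_neg_natCast_add_two (k : ℕ) :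
    sSeries 0 (cSeries * hSeries (-(k + 2 : ℕ))) = cSeries * hSeries (-(k + 2 : ℕ)) := by
  set Q := ∏ i ∈ range k, minusT (i + 3)
  have hQ : sSeries 0 Q = Q := by
    rw [map_prod]
    exact prod_congr rfl fun i _ => sSeries_zero_minusT_of_three_le (by omega)
  have hH : hSeries (-(k + 2 : ℕ)) = Q * minusT 2 * minusT 1 := by
    simpa [prod_range_succ', Q] using hSeries_neg_natCast (k + 2)
  rw [hH, map_mul, map_mul, map_mul, hQ, sSeries_zero_minusT_one, sSeries_zero_minusT_two]
  linear_combination Q * sSeries_zero_cSeries_mul_plusT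

lemma sSeries_zero_cSeries_mul_hSeries {r : ℤ} (hr : 2 ≤ |r|) :
    sSeries 0 (cSeries * hSeries r) = cSeries * hSeries r := by
  rcases le_abs'.mp hr with hr | hr
  · obtain ⟨k, rfl⟩ : ∃ k : ℕ, r = -(k + 2 : ℕ) := ⟨(-r - 2).toNat, by omega⟩
    exact sSeries_zero_cSeries_mul_hSeries_neg_natCast_add_two k
  · obtain ⟨k, rfl⟩ : ∃ k : ℕ, r = (k + 2 : ℕ) := ⟨(r - 2).toNat, by omega⟩
    exact sSeries_zero_cSeries_mul_hSeries_natCast_add_two k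

lemma dden_ne_zero (i : ℕ) : dden i ≠ 0 := by
  intro h
  have h1 := congrArg (eval fun v => if v = Sum.inr (i + 1) then (1 : ℚ) else 0) h
  rcases i with _ | i <;> simp [dden, Tv] at h1

lemma dd_eq_of_sub_eq_mul {i : ℕ} {f g : R2} (h : f - sA i f = dden i * g) :
    dd i f = toK g := by
  have hden : toK (dden i) ≠ 0 :=
    IsFractionRing.to_map_ne_zero_of_mem_nonZeroDivisors
      (mem_nonZeroDivisors_of_ne_zero (dden_ne_zero i))
  rw [dd, div_eq_iff hden, ← map_sub, h, map_mul, mul_comm]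

lemma dd_eq_zero_of_sA_eq {i : ℕ} {f : R2} (h : sA i f = f) : dd i f = 0 := by
  rw [dd, h, sub_self, zero_div]

lemma Cv_of_neg {q : ℤ} (hq : q < 0) : Cv q = 0 := if_pos hq

lemma cc_of_neg (r : ℤ) {q : ℤ} (hq : q < 0) : cc r q = 0 := by
  simp [cc, Int.toNat_of_nonpos hq.le, Cv_of_neg hq]

lemma coeff_sub_sA_of_sub_sSeries {i : ℕ} {F G : R2⟦X⟧} {d : R2}
    (h : F - sSeries i F = PowerSeries.C d * (PowerSeries.X * G)) (n : ℕ) :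
    PowerSeries.coeff n F - sA i (PowerSeries.coeff n F) =
      d * if n = 0 then 0 else PowerSeries.coeff (n - 1) G := by
  have hn := congrArg (PowerSeries.coeff n) h
  rw [map_sub, coeff_sSeries, PowerSeries.coeff_C_mul] at hn
  rw [hn]
  rcases n with _ | n
  · simp
  · simp [PowerSeries.coeff_succ_X_mul]

lemma dd_cc_of_sub_sSeries {i : ℕ} {r : ℤ} {G : R2⟦X⟧} {g : ℤ → R2}
    (hser : cSeries * hSeries r - sSeries i (cSeries * hSeries r) =
      PowerSeries.C (dden i) * (PowerSeries.X * G))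
    (hg : ∀ n : ℕ, PowerSeries.coeff n G = g n) (hg_neg : ∀ q < 0, g q = 0) (p : ℤ) :
    dd i (cc r p) = toK (g (p - 1)) := by
  rcases lt_or_ge p 0 with hp | hp
  · rw [cc_of_neg r hp, dd_eq_zero_of_sA_eq (map_zero _), hg_neg _ (by omega), map_zero]
  lift p to ℕ using hp
  apply dd_eq_of_sub_eq_mul
  rw [cc_natCast, coeff_sub_sA_of_sub_sSeries hser]
  rcases p with _ | n
  · simp [hg_neg]
  · simp [hg]

lemma dd_zero_cc_of_two_le_abs {r : ℤ} (hr : 2 ≤ |r|) (p : ℤ) : dd 0 (cc r p) = 0 := by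
  apply dd_eq_zero_of_sA_eq
  rcases lt_or_ge p 0 with hp | hp
  · rw [cc_of_neg r hp, map_zero]
  lift p to ℕ using hp
  rw [cc_natCast, ← coeff_sSeries, sSeries_zero_cSeries_mul_hSeries hr]

lemma hmt_zero_right (r : ℤ) : hmt r 0 = 1 := by
  unfold hmt
  split_ifs
  exacts [hfun_zero _, efun_zero _]

lemma cc_eq_Cv_add_sum_Icc (r q : ℤ) :
    cc r q = Cv q + ∑ j ∈ Icc 1 q.toNat, Cv (q - j) * hmt r j := by
  rw [cc, range_eq_Ico, sum_eq_sum_Ico_succ_bot (Nat.succ_pos _), Nat.succ_eq_add_one,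
    Ico_add_one_right_eq_Icc, hmt_zero_right, Nat.cast_zero, sub_zero, mul_one]

lemma two_mul_aa (s q : ℤ) : 2 * aa s q = 2 * cc s q - Cv q := by
  have hhalf : (2 : R2) * C (1 / 2 : ℚ) = 1 := by
    rw [← map_ofNat C 2, ← map_mul]
    norm_num
  rw [aa, cc_eq_Cv_add_sum_Icc]
  linear_combination Cv q * hhalf

lemma cc_zero (q : ℤ) : cc 0 q = Cv q := by
  rw [cc_eq_Cv_add_sum_Icc, add_eq_left]
  refine sum_eq_zero fun j hj => ?_
  have hj : j ≠ 0 := by simp at hj; omega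
  simp [hmt, negT, hfun, hj]

theorem statement5 (p r : ℤ) :
    (r = 1 → dd 0 (cc r p) = toK (cc 2 (p - 1))) ∧
    (r = 0 → dd 0 (cc r p) = toK (2 * cc 2 (p - 1))) ∧
    (r = -1 → dd 0 (cc r p) = toK (2 * cc 1 (p - 1) - Cv (p - 1))) ∧
    (2 ≤ |r| → dd 0 (cc r p) = 0) ∧
    dd 0 (cc (-1) p) = toK (2 * aa 1 (p - 1)) ∧
    dd 1 (cc (-1) p) = toK (2 * aa 0 (p - 1)) ∧
    dd 0 (cc (-1) p) + dd 1 (cc (-1) p) = toK (2 * cc 1 (p - 1)) := by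
  have hcc (s : ℤ) (n : ℕ) : PowerSeries.coeff n (cSeries * hSeries s) = cc s n :=
    (cc_natCast s n).symm
  have hCv (n : ℕ) : PowerSeries.coeff n cSeries = Cv n := PowerSeries.coeff_mk _ _
  have h₁ : dd 0 (cc 1 p) = toK (cc 2 (p - 1)) :=
    dd_cc_of_sub_sSeries cSeries_mul_hSeries_one_sub_sSeries_zero (hcc 2)
      (fun _ => cc_of_neg 2) p
  have h₀ : dd 0 (cc 0 p) = toK (2 * cc 2 (p - 1)) :=
    dd_cc_of_sub_sSeries (g := fun q => 2 * cc 2 q) cSeries_mul_hSeries_zero_sub_sSeries_zero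
      (by simp [two_mul, hcc]) (fun q hq => by simp [cc_of_neg 2 hq]) p
  have hm₁ : dd 0 (cc (-1) p) = toK (2 * cc 1 (p - 1) - Cv (p - 1)) :=
    dd_cc_of_sub_sSeries (g := fun q => 2 * cc 1 q - Cv q)
      cSeries_mul_hSeries_neg_one_sub_sSeries_zero (by simp [two_mul, hcc, hCv])
      (fun q hq => by simp [cc_of_neg 1 hq, Cv_of_neg hq]) p
  have hm₁' : dd 1 (cc (-1) p) = toK (Cv (p - 1)) :=
    dd_cc_of_sub_sSeries cSeries_mul_hSeries_neg_one_sub_sSeries_one hCv (fun _ => Cv_of_neg) p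
  refine ⟨fun h => h ▸ h₁, fun h => h ▸ h₀, fun h => h ▸ hm₁,
    fun h => dd_zero_cc_of_two_le_abs h p,
    by rwa [two_mul_aa], by rwa [two_mul_aa, cc_zero, two_mul, add_sub_cancel_right], ?_⟩
  rw [hm₁, hm₁', ← map_add, sub_add_cancel]
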